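/- For an integral multiflow 𝓕 in network N and a T-subpartition 𝒳 satisfying: (1) ζ_𝓕(e) = c(e) for every edge e between distinct X_s, X_t; (2) every flow-carrying path crossing into X_s is oriented with symbol s at the X_s end (so each weighted T-path is counted exactly twice in Σ_s d_c(X_s)); and (3) each component K of G∖𝒳 has at most one edge to ⋃_s X_s with ζ_𝓕(e) = c(e) − 1 and all others saturated — then, since Σ_{e∈δ(K)} ζ_𝓕(e) is even for each component K, one has Σ_{s∈T} d_c(X_s) = 2·val(𝓕) + odd_c(G∖𝒳), and hence 𝓕 is a maximum integral multiflow. -/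

import Mathlib

open scoped Classical

/-- A finite multigraph without selfloops: edges carry an (arbitrary) orientation
given by `src` and `tgt`, but are regarded as undirected. -/
structure Multigraph where
  V : Type
  E : Type
  [fV : Fintype V]
  [dV : DecidableEq V]
  [fE : Fintype E]
  [dE : DecidableEq E]
  src : E → V
  tgt : E → V
  noLoop : ∀ e, src e ≠ tgt e

attribute [instance] Multigraph.fV Multigraph.dV Multigraph.fE Multigraph.dE

namespace Multigraph

variable (G : Multigraph)

/-- the edge `e` joins the vertices `u` and `v` (in either orientation). -/
def Joins (e : G.E) (u v : G.V) : Prop :=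
  (G.src e = u ∧ G.tgt e = v) ∨ (G.src e = v ∧ G.tgt e = u)

/-- `δ(X)`: the set of edges with exactly one endpoint in `X`. -/
noncomputable def cutE (X : Set G.V) : Finset G.E :=
  Finset.univ.filter fun e =>
    (G.src e ∈ X ∧ G.tgt e ∉ X) ∨ (G.src e ∉ X ∧ G.tgt e ∈ X)

/-- `d(X) = |δ(X)|`. -/
noncomputable def d (X : Set G.V) : ℕ := (G.cutE X).card

/-- adjacency within the induced subgraph on `W`. -/
def adjOn (W : Set G.V) (u v : G.V) : Prop :=
  u ∈ W ∧ v ∈ W ∧ ∃ e, G.Joins e u v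

/-- `K` is the vertex set of a connected component of the subgraph induced on `W`. -/
def IsCompOf (W K : Set G.V) : Prop :=
  ∃ v ∈ W, K = {u | Relation.ReflTransGen (G.adjOn W) v u}

end Multigraph

/-- A `T`-path in `G`: a path whose two (distinct) endpoints are terminals of `T`
and whose internal vertices avoid `T`. -/
structure TPath (G : Multigraph) (T : Finset G.V) where
  verts : List G.V
  edges : List G.E
  hlen : verts.length = edges.length + 1
  hne : edges ≠ []
  hadj : ∀ i (h : i < edges.length),
    G.Joins (edges.get ⟨i, h⟩) (verts.get ⟨i, by omega⟩) (verts.get ⟨i + 1, by omega⟩)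
  nodup : verts.Nodup
  first : G.V
  last : G.V
  hfirst : verts.head? = some first
  hlast : verts.getLast? = some last
  hfirstT : first ∈ T
  hlastT : last ∈ T
  hinternal : ∀ i (h : i < verts.length), 0 < i → i < verts.length - 1 →
    verts.get ⟨i, h⟩ ∉ T

/-- a family of pairwise edge-disjoint `T`-paths. -/
def PairwiseEdgeDisjoint {G : Multigraph} {T : Finset G.V} {k : ℕ}
    (P : Fin k → TPath G T) : Prop :=
  ∀ i j, i ≠ j → ∀ e, e ∈ (P i).edges → e ∉ (P j).edges

/-- A `T`-subpartition: pairwise disjoint vertex sets `X s` (for `s ∈ T`)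
with `X s ∩ T = {s}`. -/
structure TSubpartition (G : Multigraph) (T : Finset G.V) where
  X : G.V → Set G.V
  hmem : ∀ s ∈ T, X s ∩ (T : Set G.V) = {s}
  hdisj : ∀ s ∈ T, ∀ t ∈ T, s ≠ t → Disjoint (X s) (X t)

namespace TSubpartition

variable {G : Multigraph} {T : Finset G.V} (𝒳 : TSubpartition G T)

/-- the vertex set of `G ∖ 𝒳`. -/
def rest : Set G.V := (⋃ s ∈ T, 𝒳.X s)ᶜ

noncomputable def dSum : ℕ := ∑ s ∈ T, G.d (𝒳.X s)

/-- number of odd components of `G ∖ 𝒳`. -/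
noncomputable def oddComps : ℕ :=
  {K : Set G.V | G.IsCompOf 𝒳.rest K ∧ Odd (G.d K)}.ncard

/-- `κ(𝒳) = (Σ_{s∈T} d(X_s) − odd(G∖𝒳)) / 2`. -/
noncomputable def kappa : ℚ := ((𝒳.dSum : ℚ) - (𝒳.oddComps : ℚ)) / 2

/-- `d(𝒳)`: the number of edges joining two distinct members of `𝒳`. -/
noncomputable def dCross : ℕ :=
  (Finset.univ.filter fun e =>
    ∃ s ∈ T, ∃ t ∈ T, s ≠ t ∧ G.src e ∈ 𝒳.X s ∧ G.tgt e ∈ 𝒳.X t).card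

end TSubpartition

/-- An integral multiflow in the network `(G, T, c)`: `T`-paths `P i` with positive
integer coefficients `α i` such that the total coefficient on each edge is at most
its capacity. -/
structure IMultiflow (G : Multigraph) (T : Finset G.V) (c : G.E → ℕ) where
  k : ℕ
  P : Fin k → TPath G T
  α : Fin k → ℕ
  hpos : ∀ i, 0 < α i
  hcap : ∀ e : G.E,
    ∑ i ∈ Finset.univ.filter (fun i => e ∈ (P i).edges), α i ≤ c e

namespace IMultiflow

variable {G : Multigraph} {T : Finset G.V} {c : G.E → ℕ}

/-- the load `ζ_𝓕(e)` of an edge. -/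
noncomputable def load (𝓕 : IMultiflow G T c) (e : G.E) : ℕ :=
  ∑ i ∈ Finset.univ.filter (fun i => e ∈ (𝓕.P i).edges), 𝓕.α i

/-- the total value of the multiflow. -/
def val (𝓕 : IMultiflow G T c) : ℕ := ∑ i, 𝓕.α i

end IMultiflow

/-- A fractional (rational) multiflow in the network `(G, T, c)`. -/
structure QMultiflow (G : Multigraph) (T : Finset G.V) (c : G.E → ℕ) where
  k : ℕ
  P : Fin k → TPath G T
  α : Fin k → ℚ
  hpos : ∀ i, 0 < α i
  hcap : ∀ e : G.E,
    ∑ i ∈ Finset.univ.filter (fun i => e ∈ (P i).edges), α i ≤ (c e : ℚ)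

namespace QMultiflow

variable {G : Multigraph} {T : Finset G.V} {c : G.E → ℕ}

def val (𝓕 : QMultiflow G T c) : ℚ := ∑ i, 𝓕.α i

end QMultiflow

/-- `d_c(X) = Σ_{e ∈ δ(X)} c(e)`. -/
noncomputable def Multigraph.dc (G : Multigraph) (c : G.E → ℕ) (X : Set G.V) : ℕ :=
  ∑ e ∈ G.cutE X, c e

namespace TSubpartition

variable {G : Multigraph} {T : Finset G.V}

/-- number of components `K` of `G∖𝒳` with `d_c(K)` odd. -/
noncomputable def oddCompsC (𝒳 : TSubpartition G T) (c : G.E → ℕ) : ℕ :=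
  {K : Set G.V | G.IsCompOf 𝒳.rest K ∧ Odd (G.dc c K)}.ncard

/-- `κ_c(𝒳) = (Σ_{s∈T} d_c(X_s) − odd_c(G∖𝒳)) / 2`. -/
noncomputable def kappaC (𝒳 : TSubpartition G T) (c : G.E → ℕ) : ℚ :=
  (((∑ s ∈ T, G.dc c (𝒳.X s) : ℕ) : ℚ) - ((𝒳.oddCompsC c : ℕ) : ℚ)) / 2

end TSubpartition


private lemma changes_even (g : ℕ → Prop) (n : ℕ) :
    Even ((Finset.range n).filter fun i => ¬(g i ↔ g (i+1))).card ↔ (g 0 ↔ g n) := by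
  induction n with
  | zero => simp
  | succ n ih =>
    rw [Finset.range_add_one, Finset.filter_insert]
    by_cases h : ¬(g n ↔ g (n+1))
    · rw [if_pos h, Finset.card_insert_of_notMem (by simp), Nat.even_add_one, ih]
      tauto
    · rw [if_neg h, ih]
      push_neg at h
      tauto

private lemma changes_le_one_out (g : ℕ → Prop) (n : ℕ)
    (h : ∀ i < n, ¬(g i ↔ g (i+1)) → (g i ∧ ¬ g (i+1))) :
    ((Finset.range n).filter fun i => ¬(g i ↔ g (i+1))).card ≤ 1 := by
  rw [Finset.card_le_one]
  have mono : ∀ a b, a ≤ b → b ≤ n → ¬ g a → ¬ g b := by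
    intro a b hab hbn hga
    induction b, hab using Nat.le_induction with
    | base => exact hga
    | succ m ham ih =>
      intro hgm1
      by_cases hgm : g m
      · exact ih (by omega) hgm
      · exact hgm ((h m (by omega) (by tauto)).1)
  intro a ha b hb
  simp only [Finset.mem_filter, Finset.mem_range] at ha hb
  by_contra hne
  rcases Nat.lt_or_ge a b with hab | hab
  · exact mono (a+1) b hab (by omega) (h a ha.1 ha.2).2 (h b hb.1 hb.2).1
  · have : b < a := by omega
    exact mono (b+1) a this (by omega) (h b hb.1 hb.2).2 (h a ha.1 ha.2).1

private lemma changes_le_one_in (g : ℕ → Prop) (n : ℕ)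
    (h : ∀ i < n, ¬(g i ↔ g (i+1)) → (¬ g i ∧ g (i+1))) :
    ((Finset.range n).filter fun i => ¬(g i ↔ g (i+1))).card ≤ 1 := by
  rw [Finset.card_le_one]
  have mono : ∀ a b, a ≤ b → b ≤ n → g a → g b := by
    intro a b hab hbn hga
    induction b, hab using Nat.le_induction with
    | base => exact hga
    | succ m ham ih =>
      by_cases hgm1 : g (m+1)
      · exact hgm1
      · have hgm := ih (by omega)
        exact absurd hgm (h m (by omega) (by tauto)).1
  intro a ha b hb
  simp only [Finset.mem_filter, Finset.mem_range] at ha hb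
  by_contra hne
  rcases Nat.lt_or_ge a b with hab | hab
  · exact (h b hb.1 hb.2).1 (mono (a+1) b hab (by omega) (h a ha.1 ha.2).2)
  · have : b < a := by omega
    exact (h a ha.1 ha.2).1 (mono (b+1) a this (by omega) (h b hb.1 hb.2).2)

namespace Multigraph
variable {G : Multigraph}

private lemma joins_unordered {e : G.E} {u v u' v' : G.V}
    (h1 : G.Joins e u v) (h2 : G.Joins e u' v') :
    (u = u' ∧ v = v') ∨ (u = v' ∧ v = u') := by
  rcases h1 with ⟨a1, b1⟩ | ⟨a1, b1⟩ <;> rcases h2 with ⟨a2, b2⟩ | ⟨a2, b2⟩ <;>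
    subst a1 <;> subst b1 <;> tauto

private lemma joins_symm {e : G.E} {u v : G.V} (h : G.Joins e u v) : G.Joins e v u := by
  rcases h with ⟨a, b⟩ | ⟨a, b⟩ <;> [right; left] <;> exact ⟨a, b⟩

private lemma mem_cutE_iff_of_joins {e : G.E} {u v : G.V} {X : Set G.V}
    (h : G.Joins e u v) : e ∈ G.cutE X ↔ ¬(u ∈ X ↔ v ∈ X) := by
  simp only [cutE, Finset.mem_filter, Finset.mem_univ, true_and]
  rcases h with ⟨a, b⟩ | ⟨a, b⟩ <;> subst a <;> subst b <;> tauto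

end Multigraph

namespace TPath
variable {G : Multigraph} {T : Finset G.V}

noncomputable def vtx (P : TPath G T) (i : ℕ) : G.V := P.verts.getD i P.first

private lemma vtx_eq_get (P : TPath G T) (i : ℕ) (h : i < P.verts.length) :
    P.vtx i = P.verts.get ⟨i, h⟩ := by
  simp [vtx, List.getD_eq_getElem?_getD, List.getElem?_eq_getElem h, List.get_eq_getElem]

private lemma verts_ne_nil (P : TPath G T) : P.verts ≠ [] := by
  have := P.hlen; intro h; rw [h] at this; simp at this

private lemma vtx_zero (P : TPath G T) : P.vtx 0 = P.first := by
  cases hv : P.verts with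
  | nil => exact absurd hv P.verts_ne_nil
  | cons a l =>
    have hf := P.hfirst
    rw [hv] at hf
    simp only [List.head?] at hf
    simp [vtx, hv, Option.some.injEq] at hf ⊢
    exact hf

private lemma vtx_last (P : TPath G T) : P.vtx P.edges.length = P.last := by
  have hl := P.hlast
  rw [List.getLast?_eq_getElem?] at hl
  have hlen := P.hlen
  simp only [vtx, List.getD_eq_getElem?_getD]
  rw [show P.edges.length = P.verts.length - 1 by omega, hl]
  rfl

private lemma joins_vtx (P : TPath G T) (i : ℕ) (h : i < P.edges.length) :
    G.Joins (P.edges.get ⟨i, h⟩) (P.vtx i) (P.vtx (i + 1)) := by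
  have hlen := P.hlen
  rw [P.vtx_eq_get i (by omega), P.vtx_eq_get (i+1) (by omega)]
  exact P.hadj i h

private lemma first_ne_last (P : TPath G T) : P.first ≠ P.last := by
  have hlen := P.hlen
  have hne : 0 < P.edges.length := List.length_pos_iff.mpr P.hne
  intro h
  have h0 := P.vtx_zero
  have h1 := P.vtx_last
  rw [P.vtx_eq_get 0 (by omega)] at h0
  rw [P.vtx_eq_get P.edges.length (by omega)] at h1
  have := (List.nodup_iff_injective_get.mp P.nodup) (h0.trans (h ▸ h1.symm))
  simp only [Fin.mk.injEq] at this
  omega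

private lemma edges_nodup (P : TPath G T) : P.edges.Nodup := by
  rw [List.nodup_iff_injective_get]
  intro a b hab
  have j1 := P.joins_vtx a a.isLt
  have j2 := P.joins_vtx b b.isLt
  rw [hab] at j1
  have hlen := P.hlen
  rcases Multigraph.joins_unordered j1 j2 with ⟨e1, e2⟩ | ⟨e1, e2⟩
  · rw [P.vtx_eq_get _ (by omega), P.vtx_eq_get _ (by omega)] at e1
    have := (List.nodup_iff_injective_get.mp P.nodup) e1
    simp only [Fin.mk.injEq] at this
    exact Fin.ext this
  · rw [P.vtx_eq_get _ (by omega), P.vtx_eq_get _ (by omega)] at e1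
    rw [P.vtx_eq_get _ (by omega), P.vtx_eq_get _ (by omega)] at e2
    have t1 := (List.nodup_iff_injective_get.mp P.nodup) e1
    have t2 := (List.nodup_iff_injective_get.mp P.nodup) e2
    simp only [Fin.mk.injEq] at t1 t2
    omega

noncomputable def ncross (P : TPath G T) (X : Set G.V) : ℕ :=
  ((Finset.range P.edges.length).filter fun i => ¬(P.vtx i ∈ X ↔ P.vtx (i+1) ∈ X)).card

private lemma even_ncross_iff (P : TPath G T) (X : Set G.V) :
    Even (P.ncross X) ↔ (P.first ∈ X ↔ P.last ∈ X) := by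
  rw [show P.ncross X = ((Finset.range P.edges.length).filter
      fun i => ¬((fun j => P.vtx j ∈ X) i ↔ (fun j => P.vtx j ∈ X) (i+1))).card from rfl,
    changes_even, P.vtx_zero, P.vtx_last]

private lemma ncross_eq_card (P : TPath G T) (X : Set G.V) :
    ((G.cutE X).filter fun e => e ∈ P.edges).card = P.ncross X := by
  symm
  unfold ncross
  apply Finset.card_bij
    (fun i hi => P.edges.get ⟨i, Finset.mem_range.mp (Finset.mem_filter.mp hi).1⟩)
  · intro i hi
    obtain ⟨hir, hchg⟩ := Finset.mem_filter.mp hi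
    have hir' := Finset.mem_range.mp hir
    rw [Finset.mem_filter]
    exact ⟨(Multigraph.mem_cutE_iff_of_joins (P.joins_vtx i hir')).mpr hchg,
      List.get_mem _ _⟩
  · intro a ha b hb h
    have := List.nodup_iff_injective_get.mp P.edges_nodup h
    simpa using congrArg Fin.val this
  · intro e he
    obtain ⟨hc, hm⟩ := Finset.mem_filter.mp he
    obtain ⟨n, hn⟩ := List.mem_iff_get.mp hm
    refine ⟨n.1, Finset.mem_filter.mpr ⟨Finset.mem_range.mpr n.isLt, ?_⟩, ?_⟩
    · have hj := P.joins_vtx n.1 n.isLt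
      rw [show P.edges.get ⟨n.1, n.isLt⟩ = e from hn] at hj
      exact (Multigraph.mem_cutE_iff_of_joins (X := X) hj).mp hc
    · exact hn

end TPath

namespace IMultiflow
variable {G : Multigraph} {T : Finset G.V} {c : G.E → ℕ}

private lemma sum_load_cut (𝓕 : IMultiflow G T c) (X : Set G.V) :
    ∑ e ∈ G.cutE X, 𝓕.load e = ∑ i, 𝓕.α i * (𝓕.P i).ncross X := by
  unfold load
  calc ∑ e ∈ G.cutE X, ∑ i ∈ Finset.univ.filter (fun i => e ∈ (𝓕.P i).edges), 𝓕.α i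
      = ∑ e ∈ G.cutE X, ∑ i, if e ∈ (𝓕.P i).edges then 𝓕.α i else 0 := by
        refine Finset.sum_congr rfl fun e _ => ?_
        rw [Finset.sum_filter]
    _ = ∑ i, ∑ e ∈ G.cutE X, if e ∈ (𝓕.P i).edges then 𝓕.α i else 0 := Finset.sum_comm
    _ = ∑ i, 𝓕.α i * (𝓕.P i).ncross X := by
        refine Finset.sum_congr rfl fun i _ => ?_
        rw [← Finset.sum_filter, Finset.sum_const, ← (𝓕.P i).ncross_eq_card X,
          smul_eq_mul, mul_comm]

private lemma load_le_cap (𝓕 : IMultiflow G T c) (e : G.E) : 𝓕.load e ≤ c e := 𝓕.hcap e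

end IMultiflow

namespace Multigraph
variable {G : Multigraph} {W K K' : Set G.V}

private lemma cutE_iff_exists {e : G.E} {X : Set G.V} :
    e ∈ G.cutE X ↔ ∃ u w, G.Joins e u w ∧ u ∈ X ∧ w ∉ X := by
  constructor
  · intro h
    simp only [cutE, Finset.mem_filter, Finset.mem_univ, true_and] at h
    rcases h with ⟨h1, h2⟩ | ⟨h1, h2⟩
    · exact ⟨G.src e, G.tgt e, Or.inl ⟨rfl, rfl⟩, h1, h2⟩
    · exact ⟨G.tgt e, G.src e, Or.inr ⟨rfl, rfl⟩, h2, h1⟩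
  · rintro ⟨u, w, hj, hu, hw⟩
    exact (mem_cutE_iff_of_joins hj).mpr (by tauto)

private lemma adjOn_symm : Symmetric (G.adjOn W) := by
  rintro u v ⟨h1, h2, e, he⟩
  exact ⟨h2, h1, e, joins_symm he⟩

private lemma comp_subset (h : G.IsCompOf W K) : K ⊆ W := by
  obtain ⟨v, hv, rfl⟩ := h
  intro u hu
  rcases (Relation.ReflTransGen.cases_tail hu) with h | ⟨w, _, ha⟩
  · rwa [← h] at hv
  · exact ha.2.1

private lemma comp_closed (h : G.IsCompOf W K) {u w : G.V} (hu : u ∈ K)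
    (ha : G.adjOn W u w) : w ∈ K := by
  obtain ⟨v, hv, rfl⟩ := h
  exact Relation.ReflTransGen.tail hu ha

private lemma comp_eq_of_mem (h : G.IsCompOf W K) (h' : G.IsCompOf W K') {u : G.V}
    (hu : u ∈ K) (hu' : u ∈ K') : K = K' := by
  obtain ⟨v, hv, rfl⟩ := h
  obtain ⟨v', hv', rfl⟩ := h'
  have hsymm : ∀ {a b : G.V}, Relation.ReflTransGen (G.adjOn W) a b →
      Relation.ReflTransGen (G.adjOn W) b a :=
    fun h => (@Relation.ReflTransGen.stdSymm _ _ ⟨fun _ _ h => adjOn_symm h⟩).symm _ _ h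
  ext x
  constructor
  · intro hx
    exact (hu'.trans (hsymm hu)).trans hx
  · intro hx
    exact (hu.trans (hsymm hu')).trans hx

end Multigraph

namespace TSubpartition
variable {G : Multigraph} {T : Finset G.V} (𝒳 : TSubpartition G T)

private lemma mem_X_self {s : G.V} (hs : s ∈ T) : s ∈ 𝒳.X s := by
  have h := 𝒳.hmem s hs
  have : s ∈ ({s} : Set G.V) := rfl
  rw [← h] at this
  exact this.1

private lemma not_mem_X_of_ne {s t : G.V} (hs : s ∈ T) (ht : t ∈ T) (hne : t ≠ s) :
    t ∉ 𝒳.X s := by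
  intro hmem
  have h := 𝒳.hmem s hs
  have : t ∈ 𝒳.X s ∩ (T : Set G.V) := ⟨hmem, ht⟩
  rw [h] at this
  exact hne this

private lemma not_rest_of_mem_X {s v : G.V} (hs : s ∈ T) (hv : v ∈ 𝒳.X s) :
    v ∉ 𝒳.rest := by
  intro hr
  exact hr (Set.mem_biUnion hs hv)

private lemma not_mem_X_of_rest {s v : G.V} (hs : s ∈ T) (hv : v ∈ 𝒳.rest) :
    v ∉ 𝒳.X s := fun h => not_rest_of_mem_X 𝒳 hs h hv

private lemma exists_X_of_not_rest {v : G.V} (h : v ∉ 𝒳.rest) :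
    ∃ s ∈ T, v ∈ 𝒳.X s := by
  simp only [rest, Set.mem_compl_iff, not_not, Set.mem_iUnion] at h
  obtain ⟨s, hs, hv⟩ := h
  exact ⟨s, hs, hv⟩

/-- the multiplicity of an edge in the family of cuts `δ(X s)`. -/
private noncomputable def nmul (e : G.E) : ℕ :=
  (T.filter fun s => e ∈ G.cutE (𝒳.X s)).card

private lemma nmul_eq_one_of_comp {K : Set G.V} (hK : G.IsCompOf 𝒳.rest K)
    {e : G.E} (he : e ∈ G.cutE K) : 𝒳.nmul e = 1 := by
  obtain ⟨u, w, hj, hu, hw⟩ := Multigraph.cutE_iff_exists.mp he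
  have huW : u ∈ 𝒳.rest := Multigraph.comp_subset hK hu
  have hwW : w ∉ 𝒳.rest := by
    intro hwr
    exact hw (Multigraph.comp_closed hK hu ⟨huW, hwr, e, hj⟩)
  obtain ⟨s, hs, hws⟩ := 𝒳.exists_X_of_not_rest hwW
  rw [nmul, Finset.card_eq_one]
  refine ⟨s, ?_⟩
  ext t
  simp only [Finset.mem_filter, Finset.mem_singleton]
  constructor
  · rintro ⟨ht, hct⟩
    obtain ⟨u', w', hj', hu', hw'⟩ := Multigraph.cutE_iff_exists.mp hct
    rcases Multigraph.joins_unordered hj hj' with ⟨e1, e2⟩ | ⟨e1, e2⟩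
    · exact absurd (e1 ▸ hu') (𝒳.not_mem_X_of_rest ht huW)
    · by_contra hne
      exact Set.disjoint_left.mp (𝒳.hdisj t ht s hs hne) (e2 ▸ hu') hws
  · rintro rfl
    refine ⟨hs, Multigraph.cutE_iff_exists.mpr ⟨w, u, Multigraph.joins_symm hj, hws,
      𝒳.not_mem_X_of_rest hs huW⟩⟩

private lemma cutE_comp_pairwise_disjoint {K K' : Set G.V}
    (hK : G.IsCompOf 𝒳.rest K) (hK' : G.IsCompOf 𝒳.rest K') (hne : K ≠ K') :
    Disjoint (G.cutE K) (G.cutE K') := by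
  rw [Finset.disjoint_left]
  intro e he he'
  obtain ⟨u, w, hj, hu, hw⟩ := Multigraph.cutE_iff_exists.mp he
  obtain ⟨u', w', hj', hu', hw'⟩ := Multigraph.cutE_iff_exists.mp he'
  rcases Multigraph.joins_unordered hj hj' with ⟨e1, e2⟩ | ⟨e1, e2⟩
  · exact hne (Multigraph.comp_eq_of_mem hK hK' hu (e1 ▸ hu'))
  · have hwK' : w ∈ K' := e2 ▸ hu'
    have hwW : w ∈ 𝒳.rest := Multigraph.comp_subset hK' hwK'
    have huW : u ∈ 𝒳.rest := Multigraph.comp_subset hK hu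
    have : w ∈ K := Multigraph.comp_closed hK hu ⟨huW, hwW, e, hj⟩
    exact hne (Multigraph.comp_eq_of_mem hK hK' this hwK')

end TSubpartition

section Stage4
variable {G : Multigraph} {T : Finset G.V} {c : G.E → ℕ} (𝒳 : TSubpartition G T)

private lemma even_ncross_comp (P : TPath G T) {K : Set G.V}
    (hK : G.IsCompOf 𝒳.rest K) : Even (P.ncross K) := by
  rw [TPath.even_ncross_iff]
  have h1 : P.first ∉ K := fun h =>
    𝒳.not_rest_of_mem_X P.hfirstT (𝒳.mem_X_self P.hfirstT) (Multigraph.comp_subset hK h)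
  have h2 : P.last ∉ K := fun h =>
    𝒳.not_rest_of_mem_X P.hlastT (𝒳.mem_X_self P.hlastT) (Multigraph.comp_subset hK h)
  tauto

private lemma odd_ncross_first (P : TPath G T) : ¬ Even (P.ncross (𝒳.X P.first)) := by
  rw [TPath.even_ncross_iff]
  have h1 : P.first ∈ 𝒳.X P.first := 𝒳.mem_X_self P.hfirstT
  have h2 : P.last ∉ 𝒳.X P.first :=
    𝒳.not_mem_X_of_ne P.hfirstT P.hlastT (Ne.symm P.first_ne_last)
  tauto

private lemma odd_ncross_last (P : TPath G T) : ¬ Even (P.ncross (𝒳.X P.last)) := by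
  rw [TPath.even_ncross_iff]
  have h1 : P.last ∈ 𝒳.X P.last := 𝒳.mem_X_self P.hlastT
  have h2 : P.first ∉ 𝒳.X P.last :=
    𝒳.not_mem_X_of_ne P.hlastT P.hfirstT P.first_ne_last
  tauto

private lemma pair_subset (P : TPath G T) : ({P.first, P.last} : Finset G.V) ⊆ T := by
  intro x hx
  rcases Finset.mem_insert.mp hx with rfl | hx
  · exact P.hfirstT
  · rw [Finset.mem_singleton] at hx
    exact hx ▸ P.hlastT

private lemma two_le_sum_ncross (P : TPath G T) : 2 ≤ ∑ s ∈ T, P.ncross (𝒳.X s) := by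
  have hsum : ∑ s ∈ ({P.first, P.last} : Finset G.V), P.ncross (𝒳.X s)
      ≤ ∑ s ∈ T, P.ncross (𝒳.X s) :=
    Finset.sum_le_sum_of_subset (pair_subset P)
  rw [Finset.sum_pair P.first_ne_last] at hsum
  have o1 : P.ncross (𝒳.X P.first) ≠ 0 := fun h => odd_ncross_first 𝒳 P (h ▸ Even.zero)
  have o2 : P.ncross (𝒳.X P.last) ≠ 0 := fun h => odd_ncross_last 𝒳 P (h ▸ Even.zero)
  omega

private lemma even_sum_load_cutK (𝓕' : IMultiflow G T c) {K : Set G.V}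
    (hK : G.IsCompOf 𝒳.rest K) : Even (∑ e ∈ G.cutE K, 𝓕'.load e) := by
  rw [IMultiflow.sum_load_cut]
  apply Finset.even_sum
  intro i _
  exact (even_ncross_comp 𝒳 _ hK).mul_left _

private lemma slack_ge_one (𝓕' : IMultiflow G T c) {K : Set G.V}
    (hK : G.IsCompOf 𝒳.rest K) (hodd : Odd (G.dc c K)) :
    1 ≤ ∑ e ∈ G.cutE K, (c e - 𝓕'.load e) := by
  have h1 : ∑ e ∈ G.cutE K, 𝓕'.load e ≤ ∑ e ∈ G.cutE K, c e :=
    Finset.sum_le_sum fun e _ => 𝓕'.hcap e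
  have h2 : ∑ e ∈ G.cutE K, c e ≤
      ∑ e ∈ G.cutE K, 𝓕'.load e + ∑ e ∈ G.cutE K, (c e - 𝓕'.load e) := by
    rw [← Finset.sum_add_distrib]
    exact Finset.sum_le_sum fun e _ => by omega
  have he := even_sum_load_cutK 𝒳 𝓕' hK
  rw [Nat.even_iff] at he
  rw [Multigraph.dc, Nat.odd_iff] at hodd
  omega

private lemma sum_cut_eq_nmul (f : G.E → ℕ) :
    ∑ s ∈ T, ∑ e ∈ G.cutE (𝒳.X s), f e = ∑ e, 𝒳.nmul e * f e := by
  calc ∑ s ∈ T, ∑ e ∈ G.cutE (𝒳.X s), f e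
      = ∑ s ∈ T, ∑ e, if e ∈ G.cutE (𝒳.X s) then f e else 0 := by
        refine Finset.sum_congr rfl fun s _ => ?_
        rw [Finset.sum_ite_mem, Finset.univ_inter]
    _ = ∑ e, ∑ s ∈ T, if e ∈ G.cutE (𝒳.X s) then f e else 0 := Finset.sum_comm
    _ = ∑ e, 𝒳.nmul e * f e := by
        refine Finset.sum_congr rfl fun e _ => ?_
        rw [← Finset.sum_filter, Finset.sum_const, smul_eq_mul]
        rfl

private lemma comps_finite : {K : Set G.V | G.IsCompOf 𝒳.rest K}.Finite :=
  Set.Finite.subset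
    (Set.finite_range fun v => {u | Relation.ReflTransGen (G.adjOn 𝒳.rest) v u})
    (by rintro K ⟨v, hv, rfl⟩; exact ⟨v, rfl⟩)

private noncomputable def compFinset : Finset (Set G.V) := (comps_finite 𝒳).toFinset

private lemma mem_compFinset {K : Set G.V} :
    K ∈ compFinset 𝒳 ↔ G.IsCompOf 𝒳.rest K := Set.Finite.mem_toFinset _

private lemma oddCompsC_eq :
    𝒳.oddCompsC c = ((compFinset 𝒳).filter fun K => Odd (G.dc c K)).card := by
  rw [TSubpartition.oddCompsC, ← Set.ncard_coe_finset]
  congr 1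
  ext K
  simp only [Set.mem_setOf_eq, Finset.coe_filter, mem_compFinset]

private lemma edges_nmul_one_eq_biUnion :
    Finset.univ.filter (fun e => 𝒳.nmul e = 1)
      = (compFinset 𝒳).biUnion (fun K => G.cutE K) := by
  ext e
  simp only [Finset.mem_filter, Finset.mem_univ, true_and, Finset.mem_biUnion,
    mem_compFinset]
  constructor
  · intro h1
    rw [TSubpartition.nmul, Finset.card_eq_one] at h1
    obtain ⟨s, hs⟩ := h1
    have hse : s ∈ T ∧ e ∈ G.cutE (𝒳.X s) :=
      Finset.mem_filter.mp (hs ▸ Finset.mem_singleton_self s)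
    obtain ⟨u, w, hj, hu, hw⟩ := Multigraph.cutE_iff_exists.mp hse.2
    have hwrest : w ∈ 𝒳.rest := by
      by_contra hwr
      obtain ⟨t, ht, hwt⟩ := 𝒳.exists_X_of_not_rest hwr
      have hts : t ≠ s := fun h => hw (h ▸ hwt)
      have het : e ∈ G.cutE (𝒳.X t) :=
        Multigraph.cutE_iff_exists.mpr ⟨w, u, Multigraph.joins_symm hj, hwt,
          Set.disjoint_left.mp (𝒳.hdisj s hse.1 t ht hts.symm) hu⟩
      have : t ∈ (T.filter fun s => e ∈ G.cutE (𝒳.X s)) := Finset.mem_filter.mpr ⟨ht, het⟩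
      rw [hs, Finset.mem_singleton] at this
      exact hts this
    refine ⟨{x | Relation.ReflTransGen (G.adjOn 𝒳.rest) w x}, ⟨w, hwrest, rfl⟩, ?_⟩
    refine Multigraph.cutE_iff_exists.mpr ⟨w, u, Multigraph.joins_symm hj,
      Relation.ReflTransGen.refl, fun hu' => ?_⟩
    exact 𝒳.not_rest_of_mem_X hse.1 hu
      (Multigraph.comp_subset ⟨w, hwrest, rfl⟩ hu')
  · rintro ⟨K, hK, he⟩
    exact 𝒳.nmul_eq_one_of_comp hK he

end Stage4

section Stage5
variable {G : Multigraph} {T : Finset G.V} {c : G.E → ℕ} (𝒳 : TSubpartition G T)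

private lemma sum_ncross_eq_two (P : TPath G T)
    (hout : ∀ s ∈ T, ∀ i, i < P.edges.length →
      P.vtx i ∈ 𝒳.X s → P.vtx (i+1) ∉ 𝒳.X s → P.first = s)
    (hin : ∀ s ∈ T, ∀ i, i < P.edges.length →
      P.vtx (i+1) ∈ 𝒳.X s → P.vtx i ∉ 𝒳.X s → P.last = s) :
    ∑ s ∈ T, P.ncross (𝒳.X s) = 2 := by
  have key : ∀ s ∈ T, s ∉ ({P.first, P.last} : Finset G.V) → P.ncross (𝒳.X s) = 0 := by
    intro s hs hsm
    simp only [Finset.mem_insert, Finset.mem_singleton, not_or] at hsm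
    rw [TPath.ncross, Finset.card_eq_zero, Finset.filter_eq_empty_iff]
    intro i hi
    rw [Finset.mem_range] at hi
    intro hchg
    by_cases hvi : P.vtx i ∈ 𝒳.X s
    · have hvn : P.vtx (i+1) ∉ 𝒳.X s := fun h => hchg (iff_of_true hvi h)
      exact hsm.1 (hout s hs i hi hvi hvn).symm
    · have hvn : P.vtx (i+1) ∈ 𝒳.X s := by tauto
      exact hsm.2 (hin s hs i hi hvn hvi).symm
  have kf : P.ncross (𝒳.X P.first) = 1 := by
    have hle1 : ((Finset.range P.edges.length).filter
        fun i => ¬(P.vtx i ∈ 𝒳.X P.first ↔ P.vtx (i+1) ∈ 𝒳.X P.first)).card ≤ 1 := by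
      apply changes_le_one_out
      intro i hi hchg
      by_cases hvi : P.vtx i ∈ 𝒳.X P.first
      · exact ⟨hvi, fun hvn => hchg (iff_of_true hvi hvn)⟩
      · have hvn : P.vtx (i+1) ∈ 𝒳.X P.first := by tauto
        exact absurd (hin P.first P.hfirstT i hi hvn hvi) P.first_ne_last.symm
    have hle : P.ncross (𝒳.X P.first) ≤ 1 := hle1
    have hne : P.ncross (𝒳.X P.first) ≠ 0 :=
      fun h => odd_ncross_first 𝒳 P (h ▸ Even.zero)
    omega
  have kl : P.ncross (𝒳.X P.last) = 1 := by
    have hle1 : ((Finset.range P.edges.length).filter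
        fun i => ¬(P.vtx i ∈ 𝒳.X P.last ↔ P.vtx (i+1) ∈ 𝒳.X P.last)).card ≤ 1 := by
      apply changes_le_one_in
      intro i hi hchg
      by_cases hvn : P.vtx (i+1) ∈ 𝒳.X P.last
      · exact ⟨fun hvi => hchg (iff_of_true hvi hvn), hvn⟩
      · have hvi : P.vtx i ∈ 𝒳.X P.last := by tauto
        exact absurd (hout P.last P.hlastT i hi hvi hvn) P.first_ne_last
    have hle : P.ncross (𝒳.X P.last) ≤ 1 := hle1
    have hne : P.ncross (𝒳.X P.last) ≠ 0 :=
      fun h => odd_ncross_last 𝒳 P (h ▸ Even.zero)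
    omega
  have hsub : ∑ s ∈ T, P.ncross (𝒳.X s)
      = ∑ s ∈ ({P.first, P.last} : Finset G.V), P.ncross (𝒳.X s) :=
    (Finset.sum_subset (pair_subset P) key).symm
  rw [hsub, Finset.sum_pair P.first_ne_last, kf, kl]

private lemma slack_exact (𝓕 : IMultiflow G T c) {K : Set G.V}
    (hK : G.IsCompOf 𝒳.rest K)
    (h3a : ∀ e ∈ G.cutE K, 𝓕.load e = c e ∨ 𝓕.load e + 1 = c e)
    (h3b : ∀ e ∈ G.cutE K, ∀ e' ∈ G.cutE K, e ≠ e' →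
      𝓕.load e + 1 = c e → 𝓕.load e' = c e') :
    ∑ e ∈ G.cutE K, (c e - 𝓕.load e) = if Odd (G.dc c K) then 1 else 0 := by
  have hcard : ∑ e ∈ G.cutE K, (c e - 𝓕.load e) ≤ 1 := by
    have heq : ∑ e ∈ G.cutE K, (c e - 𝓕.load e)
        = ∑ e ∈ G.cutE K, (if 𝓕.load e + 1 = c e then 1 else 0) := by
      refine Finset.sum_congr rfl fun e he => ?_
      rcases h3a e he with h | h
      · rw [if_neg (by omega)]; omega
      · rw [if_pos h]; omega
    rw [heq, ← Finset.sum_filter, Finset.sum_const, smul_eq_mul, mul_one]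
    rw [Finset.card_le_one]
    intro e he e' he'
    rw [Finset.mem_filter] at he he'
    by_contra hne
    have := h3b e he.1 e' he'.1 hne he.2
    omega
  have heven := even_sum_load_cutK 𝒳 𝓕 hK
  have hsum : G.dc c K = ∑ e ∈ G.cutE K, 𝓕.load e + ∑ e ∈ G.cutE K, (c e - 𝓕.load e) := by
    rw [Multigraph.dc, ← Finset.sum_add_distrib]
    refine Finset.sum_congr rfl fun e he => ?_
    have hcape : 𝓕.load e ≤ c e := 𝓕.hcap e
    omega
  rw [Nat.even_iff] at heven
  by_cases hodd : Odd (G.dc c K)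
  · rw [if_pos hodd]
    rw [Nat.odd_iff] at hodd
    omega
  · rw [if_neg hodd]
    rw [Nat.odd_iff] at hodd
    omega

end Stage5


/-- Optimality certificate for an integral multiflow: if (1) every edge between
distinct members `X_s`, `X_t` of `𝒳` is saturated, (2) every flow path crossing out
of `X_s` is oriented with terminal `s` on its `X_s` side (so each weighted `T`-path
is counted exactly twice in `Σ_s d_c(X_s)`), and (3) each component `K` of `G∖𝒳` has
at most one incident cut edge with load `c(e) − 1` and all its other cut edges are
saturated, then `Σ_{s∈T} d_c(X_s) = 2·val(𝓕) + odd_c(G∖𝒳)` and `𝓕` is a maximum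
integral multiflow. -/
theorem multiflow_termination_optimal (G : Multigraph) (T : Finset G.V)
    (c : G.E → ℕ) (𝓕 : IMultiflow G T c) (𝒳 : TSubpartition G T)
    (h1 : ∀ e : G.E, ∀ s ∈ T, ∀ t ∈ T, s ≠ t →
      G.src e ∈ 𝒳.X s → G.tgt e ∈ 𝒳.X t → 𝓕.load e = c e)
    (h2 : ∀ j : Fin 𝓕.k, ∀ i, ∀ hi : i + 1 < (𝓕.P j).verts.length, ∀ s ∈ T,
      (((𝓕.P j).verts.get ⟨i, by omega⟩ ∈ 𝒳.X s ∧
        (𝓕.P j).verts.get ⟨i + 1, hi⟩ ∉ 𝒳.X s) → (𝓕.P j).first = s) ∧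
      (((𝓕.P j).verts.get ⟨i + 1, hi⟩ ∈ 𝒳.X s ∧
        (𝓕.P j).verts.get ⟨i, by omega⟩ ∉ 𝒳.X s) → (𝓕.P j).last = s))
    (h3 : ∀ K : Set G.V, G.IsCompOf 𝒳.rest K →
      (∀ e ∈ G.cutE K, 𝓕.load e = c e ∨ 𝓕.load e + 1 = c e) ∧
      (∀ e ∈ G.cutE K, ∀ e' ∈ G.cutE K, e ≠ e' →
        𝓕.load e + 1 = c e → 𝓕.load e' = c e')) :
    (∑ s ∈ T, G.dc c (𝒳.X s)) = 2 * 𝓕.val + 𝒳.oddCompsC c ∧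
    IsGreatest {m : ℕ | ∃ 𝓕' : IMultiflow G T c, 𝓕'.val = m} 𝓕.val := by
  -- total cut capacity via edge multiplicities
  have hA : ∑ s ∈ T, G.dc c (𝒳.X s) = ∑ e, 𝒳.nmul e * c e := by
    simp only [Multigraph.dc]
    exact sum_cut_eq_nmul 𝒳 c
  -- the load part, for any multiflow
  have hB : ∀ 𝓖 : IMultiflow G T c, ∑ e, 𝒳.nmul e * 𝓖.load e
      = ∑ i, 𝓖.α i * ∑ s ∈ T, (𝓖.P i).ncross (𝒳.X s) := by
    intro 𝓖
    rw [← sum_cut_eq_nmul]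
    calc ∑ s ∈ T, ∑ e ∈ G.cutE (𝒳.X s), 𝓖.load e
        = ∑ s ∈ T, ∑ i, 𝓖.α i * (𝓖.P i).ncross (𝒳.X s) :=
          Finset.sum_congr rfl fun s _ => 𝓖.sum_load_cut (𝒳.X s)
      _ = ∑ i, ∑ s ∈ T, 𝓖.α i * (𝓖.P i).ncross (𝒳.X s) := Finset.sum_comm
      _ = ∑ i, 𝓖.α i * ∑ s ∈ T, (𝓖.P i).ncross (𝒳.X s) := by
          refine Finset.sum_congr rfl fun i _ => ?_
          rw [Finset.mul_sum]
  -- splitting capacity into load and slack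
  have hC : ∀ 𝓖 : IMultiflow G T c, ∑ e, 𝒳.nmul e * c e
      = ∑ e, 𝒳.nmul e * 𝓖.load e + ∑ e, 𝒳.nmul e * (c e - 𝓖.load e) := by
    intro 𝓖
    rw [← Finset.sum_add_distrib]
    refine Finset.sum_congr rfl fun e _ => ?_
    have hcape : 𝓖.load e ≤ c e := 𝓖.hcap e
    rw [← Nat.mul_add, Nat.add_sub_cancel' hcape]
  -- each path of 𝓕 crosses the cuts exactly twice
  have hexact : ∀ j : Fin 𝓕.k, ∑ s ∈ T, (𝓕.P j).ncross (𝒳.X s) = 2 := by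
    intro j
    have hlen := (𝓕.P j).hlen
    apply sum_ncross_eq_two
    · intro s hs i hi hvi hvn
      have hi' : i + 1 < (𝓕.P j).verts.length := by omega
      refine (h2 j i hi' s hs).1 ⟨?_, ?_⟩
      · rwa [(𝓕.P j).vtx_eq_get i (by omega)] at hvi
      · rwa [(𝓕.P j).vtx_eq_get (i+1) (by omega)] at hvn
    · intro s hs i hi hvn hvi
      have hi' : i + 1 < (𝓕.P j).verts.length := by omega
      refine (h2 j i hi' s hs).2 ⟨?_, ?_⟩
      · rwa [(𝓕.P j).vtx_eq_get (i+1) (by omega)] at hvn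
      · rwa [(𝓕.P j).vtx_eq_get i (by omega)] at hvi
  -- slack restricted to multiplicity-one edges, for any multiflow
  have hD : ∀ 𝓖 : IMultiflow G T c,
      (∀ e : G.E, 2 ≤ 𝒳.nmul e → 𝓖.load e = c e) →
      ∑ e, 𝒳.nmul e * (c e - 𝓖.load e)
        = ∑ e ∈ Finset.univ.filter (fun e => 𝒳.nmul e = 1), (c e - 𝓖.load e) := by
    intro 𝓖 hsat
    rw [Finset.sum_filter]
    refine Finset.sum_congr rfl fun e _ => ?_
    by_cases h : 𝒳.nmul e = 1
    · rw [if_pos h, h, one_mul]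
    · rw [if_neg h]
      rcases Nat.lt_or_ge (𝒳.nmul e) 2 with hlt | hge
      · have h0 : 𝒳.nmul e = 0 := by omega
        rw [h0, zero_mul]
      · rw [hsat e hge, Nat.sub_self, Nat.mul_zero]
  -- nmul ≥ 2 forces an edge between two distinct parts of 𝒳
  have hsat2 : ∀ e : G.E, 2 ≤ 𝒳.nmul e → 𝓕.load e = c e := by
    intro e hge
    rw [TSubpartition.nmul] at hge
    obtain ⟨s, hs, t, ht, hst⟩ := Finset.one_lt_card.mp hge
    rw [Finset.mem_filter] at hs ht
    obtain ⟨u, w, hj, hu, hw⟩ := Multigraph.cutE_iff_exists.mp hs.2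
    obtain ⟨u', w', hj', hu', hw'⟩ := Multigraph.cutE_iff_exists.mp ht.2
    have hne : s ≠ t := hst
    have h' : u' = w ∧ w' = u := by
      rcases Multigraph.joins_unordered hj hj' with ⟨e1, e2⟩ | ⟨e1, e2⟩
      · exact absurd (e1 ▸ hu')
          (Set.disjoint_left.mp (𝒳.hdisj s hs.1 t ht.1 hne) hu)
      · exact ⟨e2.symm, e1.symm⟩
    have hwt : w ∈ 𝒳.X t := h'.1 ▸ hu'
    rcases hj with ⟨ha, hb⟩ | ⟨ha, hb⟩
    · exact h1 e s hs.1 t ht.1 hne (ha ▸ hu) (hb ▸ hwt)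
    · exact h1 e t ht.1 s hs.1 hne.symm (ha ▸ hwt) (hb ▸ hu)
  -- sum over multiplicity-one edges = sum over components
  have hE : ∀ 𝓖 : IMultiflow G T c,
      ∑ e ∈ Finset.univ.filter (fun e => 𝒳.nmul e = 1), (c e - 𝓖.load e)
        = ∑ K ∈ compFinset 𝒳, ∑ e ∈ G.cutE K, (c e - 𝓖.load e) := by
    intro 𝓖
    rw [edges_nmul_one_eq_biUnion]
    refine Finset.sum_biUnion ?_
    intro K hK K' hK' hne
    exact 𝒳.cutE_comp_pairwise_disjoint ((mem_compFinset 𝒳).mp hK)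
      ((mem_compFinset 𝒳).mp hK') hne
  -- odd component count as a sum
  have hodds : (𝒳.oddCompsC c)
      = ∑ K ∈ compFinset 𝒳, (if Odd (G.dc c K) then 1 else 0) := by
    rw [oddCompsC_eq, ← Finset.sum_filter, Finset.sum_const, smul_eq_mul, mul_one]
  -- Part 1: the exact identity
  have main1 : ∑ s ∈ T, G.dc c (𝒳.X s) = 2 * 𝓕.val + 𝒳.oddCompsC c := by
    rw [hA, hC 𝓕, hB 𝓕, hD 𝓕 hsat2, hE 𝓕]
    have e1 : ∑ i, 𝓕.α i * ∑ s ∈ T, (𝓕.P i).ncross (𝒳.X s) = 2 * 𝓕.val := by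
      calc ∑ i, 𝓕.α i * ∑ s ∈ T, (𝓕.P i).ncross (𝒳.X s)
          = ∑ i, 𝓕.α i * 2 := Finset.sum_congr rfl fun i _ => by rw [hexact i]
        _ = 2 * 𝓕.val := by
            rw [IMultiflow.val, Finset.mul_sum]
            exact Finset.sum_congr rfl fun i _ => mul_comm _ _
    have e2 : ∑ K ∈ compFinset 𝒳, ∑ e ∈ G.cutE K, (c e - 𝓕.load e) = 𝒳.oddCompsC c := by
      rw [hodds]
      refine Finset.sum_congr rfl fun K hK => ?_
      have hKc := (mem_compFinset 𝒳).mp hK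
      exact slack_exact 𝒳 𝓕 hKc (h3 K hKc).1 (h3 K hKc).2
    rw [e1, e2]
  refine ⟨main1, ⟨𝓕, rfl⟩, ?_⟩
  rintro m ⟨𝓖, rfl⟩
  -- the upper bound for an arbitrary integral multiflow 𝓖
  have e1 : 2 * 𝓖.val ≤ ∑ e, 𝒳.nmul e * 𝓖.load e := by
    rw [hB 𝓖, IMultiflow.val, Finset.mul_sum]
    refine Finset.sum_le_sum fun i _ => ?_
    calc 2 * 𝓖.α i = 𝓖.α i * 2 := mul_comm _ _
      _ ≤ 𝓖.α i * ∑ s ∈ T, (𝓖.P i).ncross (𝒳.X s) :=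
          Nat.mul_le_mul_left _ (two_le_sum_ncross 𝒳 (𝓖.P i))
  have e2 : 𝒳.oddCompsC c ≤ ∑ e, 𝒳.nmul e * (c e - 𝓖.load e) := by
    have step1 : 𝒳.oddCompsC c ≤ ∑ K ∈ compFinset 𝒳, ∑ e ∈ G.cutE K, (c e - 𝓖.load e) := by
      rw [hodds]
      refine Finset.sum_le_sum fun K hK => ?_
      have hKc := (mem_compFinset 𝒳).mp hK
      by_cases hodd : Odd (G.dc c K)
      · rw [if_pos hodd]
        exact slack_ge_one 𝒳 𝓖 hKc hodd
      · rw [if_neg hodd]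
        exact Nat.zero_le _
    have step2 : ∑ K ∈ compFinset 𝒳, ∑ e ∈ G.cutE K, (c e - 𝓖.load e)
        ≤ ∑ e, 𝒳.nmul e * (c e - 𝓖.load e) := by
      rw [← hE 𝓖]
      have hcong : ∑ e ∈ Finset.univ.filter (fun e => 𝒳.nmul e = 1), (c e - 𝓖.load e)
          = ∑ e ∈ Finset.univ.filter (fun e => 𝒳.nmul e = 1),
              𝒳.nmul e * (c e - 𝓖.load e) := by
        refine Finset.sum_congr rfl fun e he => ?_
        rw [(Finset.mem_filter.mp he).2, one_mul]
      rw [hcong]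
      exact Finset.sum_le_sum_of_subset (Finset.filter_subset _ _)
    exact step1.trans step2
  have hub : 2 * 𝓖.val + 𝒳.oddCompsC c ≤ ∑ s ∈ T, G.dc c (𝒳.X s) := by
    rw [hA, hC 𝓖]
    omega
  rw [main1] at hub
  omega
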